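/- For every edge price α > 2n−6, every min cycle of a non-tree stable (pure Nash equilibrium) network (G(s),α) with n ≥ 4 agents is directed and has length at least 5. -/

import Mathlib

open scoped BigOperators

namespace NCG

variable {V : Type*} [Fintype V] [DecidableEq V]

/-- The network induced by a strategy vector `st`: `{u,v}` is an edge iff (at least)
one of the endpoints buys it, i.e. `v ∈ st u` or `u ∈ st v`. -/
def graph (st : V → Finset V) : SimpleGraph V where
  Adj u v := u ≠ v ∧ (v ∈ st u ∨ u ∈ st v)
  symm := ⟨fun u v h => ⟨h.1.symm, h.2.symm⟩⟩
  loopless := ⟨fun u h => h.1 rfl⟩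

open scoped Classical in
/-- The distance cost of agent `u`: the sum of the graph distances to all nodes if the
network is connected, and `⊤` otherwise. -/
noncomputable def distcost (st : V → Finset V) (u : V) : EReal :=
  if (graph st).Connected then (((∑ w : V, ((graph st).dist u w : ℝ)) : ℝ) : EReal) else ⊤

/-- The cost of agent `u`: `α` per bought edge plus the distance cost. -/
noncomputable def cost (α : ℝ) (st : V → Finset V) (u : V) : EReal :=
  ((α * (st u).card : ℝ) : EReal) + distcost st u

/-- A network is stable (a pure Nash equilibrium) if no agent `u` can strictly
decrease her cost by unilaterally changing her own strategy set `st u`. -/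
def Stable (α : ℝ) (st : V → Finset V) : Prop :=
  ∀ u : V, ∀ t : Finset V, u ∉ t → cost α st u ≤ cost α (Function.update st u t) u

/-- The social cost of a network: the sum of the costs of all agents. -/
noncomputable def socialCost (α : ℝ) (st : V → Finset V) : EReal :=
  ∑ u : V, cost α st u

/-- The optimal (minimum) social cost over all strategy vectors on agent set `W`. -/
noncomputable def optCost (α : ℝ) (W : Type*) [Fintype W] [DecidableEq W] : EReal :=
  sInf {c : EReal | ∃ st : W → Finset W, (∀ u, u ∉ st u) ∧ c = socialCost α st}

/-- `T` is a shortest path tree of `G` rooted at `r`: a spanning tree of `G`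
preserving all distances from `r`. -/
def IsSPT (G : SimpleGraph V) (r : V) (T : SimpleGraph V) : Prop :=
  T ≤ G ∧ T.IsTree ∧ ∀ x, T.dist r x = G.dist r x

/-- The subgraph of `G` induced on `S` is biconnected: it has at least 3 vertices,
it is connected, and it has no cut vertex. -/
def IsBiconnectedOn (G : SimpleGraph V) (S : Set V) : Prop :=
  3 ≤ S.ncard ∧ (G.induce S).Connected ∧ ∀ x ∈ S, (G.induce (S \ {x})).Connected

/-- `S` induces a biconnected component of `G`: a maximal biconnected induced subgraph. -/
def IsBiconnectedComponent (G : SimpleGraph V) (S : Set V) : Prop :=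
  IsBiconnectedOn G S ∧ ∀ S' : Set V, S ⊆ S' → IsBiconnectedOn G S' → S' = S

/-- `⟨v,u⟩` is a critical pair (with witnesses `v₁, v₂, u'` and biconnected component `H`)
of the network induced by the strategy vector `st`:
(1) `v ∈ H` buys the two distinct non-bridge edges `(v,v₁)` and `(v,v₂)` with `v₁,v₂ ∈ H`;
(2) `u ∈ H`, `u ≠ v`, buys an edge `(u,u')` with `u' ∈ H`, `u' ≠ v`;
(3) `d(v,u) ≥ 2`;
(4) some shortest path from `v` to `u` uses the edge `(v,v₁)`;
(5) some shortest path from `v` to `u'` does not use the edge `(u,u')`. -/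
def IsCriticalPair (st : V → Finset V) (H : Set V) (v u v₁ v₂ u' : V) : Prop :=
  IsBiconnectedComponent (graph st) H ∧
  v ∈ H ∧ v₁ ∈ H ∧ v₂ ∈ H ∧ v₁ ≠ v₂ ∧
  v₁ ∈ st v ∧ v₂ ∈ st v ∧
  ¬ (graph st).IsBridge s(v, v₁) ∧ ¬ (graph st).IsBridge s(v, v₂) ∧
  u ∈ H ∧ u ≠ v ∧ u' ∈ H ∧ u' ≠ v ∧ u' ∈ st u ∧
  2 ≤ (graph st).dist v u ∧
  (∃ p : (graph st).Walk v u, p.IsPath ∧ p.length = (graph st).dist v u ∧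
    s(v, v₁) ∈ p.edges) ∧
  (∃ p : (graph st).Walk v u', p.IsPath ∧ p.length = (graph st).dist v u' ∧
    s(u, u') ∉ p.edges)

/-- A critical pair is strong if moreover some shortest path from `u` to `v₂`
does not use the edge `(v,v₂)`. -/
def IsStrongCriticalPair (st : V → Finset V) (H : Set V) (v u v₁ v₂ u' : V) : Prop :=
  IsCriticalPair st H v u v₁ v₂ u' ∧
  ∃ p : (graph st).Walk u v₂, p.IsPath ∧ p.length = (graph st).dist u v₂ ∧
    s(v, v₂) ∉ p.edges

/-- A cycle `c` in `G` is a min cycle if for every two vertices on the cycle, their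
distance along the cycle equals their distance in `G`. -/
def IsMinCycle (G : SimpleGraph V) {a : V} (c : G.Walk a a) : Prop :=
  c.IsCycle ∧ ∀ (x : V) (hx : x ∈ c.toSubgraph.verts) (y : V) (hy : y ∈ c.toSubgraph.verts),
    c.toSubgraph.coe.dist ⟨x, hx⟩ ⟨y, hy⟩ = G.dist x y

/-- A cycle `c` of the network induced by `st` is directed if, traversed in one of the
two possible directions, every edge of the cycle is bought by its tail vertex. -/
def IsDirectedCycle (st : V → Finset V) {a : V} (c : (graph st).Walk a a) : Prop :=
  c.IsCycle ∧
    ((∀ i < c.length, c.getVert (i + 1) ∈ st (c.getVert i)) ∨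
     (∀ i < c.length, c.getVert i ∈ st (c.getVert (i + 1))))

/-- `c` is a centroid of (the subgraph of `G` induced on) `S`: every connected component
obtained from `S` by removing `c` contains at most `|S|/2` vertices. -/
def IsCentroidOn (G : SimpleGraph V) (S : Set V) (c : V) : Prop :=
  c ∈ S ∧ ∀ x ∈ S, x ≠ c →
    2 * {y | y ∈ S ∧ ∃ p : G.Walk x y, c ∉ p.support ∧ ∀ z ∈ p.support, z ∈ S}.ncard
      ≤ S.ncard

end NCG

/-!
Each case is refuted by a deviation of one or two agents whose gain, bounded through the
distances on the min cycle, exceeds `2n - 6`. On a triangle or a 4-cycle, the buyer of a cycle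
edge drops it: the rest of the cycle is a detour of length `k - 1` that lengthens none of her
distances to the other cycle vertices but that neighbour, so her distance cost grows by at most
`(k - 2)(n - k + 1) ≤ 2n - 6`.
On a longer min cycle that is not directed, some vertex `v` buys both of its cycle edges; let `u`
be the buyer of the cycle edge opposite to `v`. Then `v` can trade her two cycle edges for one
edge to `u`, and `u` her cycle edge for one edge to `v`: the arcs of the cycle reroute every lost
edge without lengthening any distance from the new neighbour, and the two stability inequalities
add up to `α ≤ 2(n - 1) - 2 d(u, v) ≤ 2n - 6`.
-/

namespace SimpleGraph

variable {V : Type*} {G G' : SimpleGraph V}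

theorem exists_walk_length_eq_of_notMem_support {a : V}
    (hkeep : ∀ x y, G.Adj x y → x ≠ a → y ≠ a → G'.Adj x y) {x y : V} (p : G.Walk x y)
    (hp : a ∉ p.support) : ∃ q : G'.Walk x y, q.length = p.length := by
  induction p with
  | nil => exact ⟨.nil, rfl⟩
  | cons h p ih =>
    rw [Walk.support_cons, List.mem_cons, not_or] at hp
    obtain ⟨q, hq⟩ := ih hp.2
    have hy : _ ≠ a := fun h' => hp.2 (h' ▸ p.start_mem_support)
    exact ⟨.cons (hkeep _ _ h (Ne.symm hp.1) hy) q, by simp [hq]⟩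

theorem exists_walk_length_le_dist_of_rewire [DecidableEq V] {r a : V} (hG : G.Connected)
    (hkeep : ∀ x y, G.Adj x y → x ≠ a → y ≠ a → G'.Adj x y) (hra : G'.Adj r a)
    (hlost : ∀ b, G.Adj a b → G'.Adj a b ∨
      ∃ p : G.Walk r b, a ∉ p.support ∧ p.length ≤ G.dist r a + 1)
    (w : V) : ∃ q : G'.Walk r w, q.length ≤ G.dist r w := by
  obtain ⟨p, hp, hpl⟩ := hG.exists_path_of_dist r w
  by_cases ha : a ∉ p.support
  · obtain ⟨q, hq⟩ := exists_walk_length_eq_of_notMem_support hkeep p ha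
    exact ⟨q, hq.trans_le hpl.le⟩
  rw [not_not] at ha
  have hpre : G.dist r a ≤ (p.takeUntil a ha).length := dist_le _
  have hr : 0 < G.dist r a := hG.pos_dist_of_ne hra.ne
  obtain ⟨s, hs, hsl⟩ : ∃ s : G.Walk a w,
      s.IsPath ∧ (p.takeUntil a ha).length + s.length = p.length :=
    ⟨_, hp.dropUntil ha, by rw [← Walk.length_append, p.take_spec ha]⟩
  -- The part of `p` before `a` becomes the edge `ra`, and the first edge after `a`, if lost,
  -- a walk of length at most `d(r, a) + 1`.
  cases s with
  | nil => exact ⟨.cons hra .nil, by simp; omega⟩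
  | cons hab s =>
    rw [Walk.cons_isPath_iff] at hs
    obtain ⟨t, ht⟩ := exists_walk_length_eq_of_notMem_support hkeep s hs.2
    rcases hlost _ hab with hab' | ⟨q, hq, hql⟩
    · exact ⟨.cons hra (.cons hab' t), by simp [Walk.length_cons] at hsl ⊢; omega⟩
    · obtain ⟨q', hq'⟩ := exists_walk_length_eq_of_notMem_support hkeep q hq
      exact ⟨q'.append t, by simp [Walk.length_cons] at hsl ⊢; omega⟩

theorem exists_walk_length_add_one_le_of_detour {a b : V} (hG : G.Connected)
    (hkeep : ∀ x y, G.Adj x y → x ≠ a → y ≠ a → G'.Adj x y)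
    (hkeep' : ∀ y, G.Adj a y → y ≠ b → G'.Adj a y) (D : G'.Walk a b) (hab : a ≠ b) (w : V) :
    ∃ q : G'.Walk a w, q.length + 1 ≤ G.dist a w + D.length := by
  have hD : D.length ≠ 0 := fun h => hab (Walk.eq_of_length_eq_zero h)
  obtain ⟨p, hp, hpl⟩ := hG.exists_path_of_dist a w
  cases p with
  | nil => exact ⟨.nil, by rw [Walk.length_nil]; omega⟩
  | @cons _ b' _ h p =>
    rw [Walk.cons_isPath_iff] at hp
    obtain ⟨t, ht⟩ := exists_walk_length_eq_of_notMem_support hkeep p hp.2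
    rw [Walk.length_cons] at hpl
    by_cases hb : b' = b
    · subst hb
      exact ⟨D.append t, by rw [Walk.length_append]; omega⟩
    · exact ⟨.cons (hkeep' _ h hb) t, by rw [Walk.length_cons]; omega⟩

end SimpleGraph

open Finset in
theorem Finset.sum_le_sum_add_card_compl_mul {ι : Type*} [Fintype ι] [DecidableEq ι]
    (S : Finset ι) {f g : ι → ℕ} {m : ℕ} (hS : ∀ i ∈ S, f i ≤ g i)
    (hSc : ∀ i ∉ S, f i ≤ g i + m) : ∑ i, f i ≤ ∑ i, g i + #Sᶜ * m := by
  rw [← sum_add_sum_compl S f, ← sum_add_sum_compl S g]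
  have hin := sum_le_sum hS
  have hout : ∑ i ∈ Sᶜ, f i ≤ ∑ i ∈ Sᶜ, (g i + m) :=
    sum_le_sum fun i hi => hSc i (mem_compl.1 hi)
  rw [sum_add_distrib, sum_const, smul_eq_mul] at hout
  omega

theorem forall_or_forall_of_periodic {F B : ℕ → Prop} {k : ℕ} (hk : 0 < k)
    (hB : Function.Periodic B k) (hFB : ∀ t, F t ∨ B t) (hswitch : ∀ t, B t → ¬F (t + 1)) :
    (∀ t, F t) ∨ ∀ t, B t := by
  refine or_iff_not_imp_left.2 fun hF => ?_
  obtain ⟨i, hi⟩ := not_forall.1 hF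
  have hBi : ∀ s, B (i + s) := fun s => by
    induction s with
    | zero => exact (hFB i).resolve_left hi
    | succ s ih => exact (hFB (i + s + 1)).resolve_left (hswitch _ ih)
  intro t
  have hik : i ≤ i * k := Nat.le_mul_of_pos_right i hk
  rw [← hB.nat_mul i t]
  simpa [show i + (t + i * k - i) = t + i * k by omega] using hBi (t + i * k - i)

namespace SimpleGraph

variable {V : Type*} {G : SimpleGraph V}

/-- `i - j + (j - i)` is `|i - j|` in `ℕ`. -/
def cycDist (k i j : ℕ) : ℕ := min (i - j + (j - i)) (k - (i - j + (j - i)))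

theorem Walk.getVert_mod_length {a : V} (c : G.Walk a a) {t : ℕ} (ht : t ≤ c.length) :
    c.getVert (t % c.length) = c.getVert t := by
  rcases ht.lt_or_eq with ht | rfl
  · rw [Nat.mod_eq_of_lt ht]
  · rw [Nat.mod_self, Walk.getVert_zero, Walk.getVert_length]

theorem Walk.IsCycle.cycDist_le_length {a : V} {c : G.Walk a a} (hc : c.IsCycle)
    {A B : c.toSubgraph.verts} (q : c.toSubgraph.coe.Walk A B) {i j : ℕ} (hi : i < c.length)
    (hj : j < c.length) (hA : A.1 = c.getVert i) (hB : B.1 = c.getVert j) :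
    cycDist c.length i j ≤ q.length := by
  have hinj {i j : ℕ} (hi : i < c.length) (hj : j < c.length) (h : c.getVert i = c.getVert j) :
      i = j := hc.getVert_injOn' (by simp only [Set.mem_ofPred_eq]; omega)
        (by simp only [Set.mem_ofPred_eq]; omega) h
  induction q generalizing i with
  | nil =>
    obtain rfl := hinj hi hj (hA.symm.trans hB)
    simp [cycDist]
  | @cons A M B hAM q ih =>
    obtain ⟨t, hedge, ht⟩ := (Walk.toSubgraph_adj_iff c).1 hAM
    have hsucc : c.getVert ((t + 1) % c.length) = c.getVert (t + 1) :=
      c.getVert_mod_length (by omega)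
    have hwrap : (t + 1) % c.length = t + 1 ∨ ((t + 1) % c.length = 0 ∧ t + 1 = c.length) := by
      rcases Nat.lt_or_ge (t + 1) c.length with h | h
      · exact .inl (Nat.mod_eq_of_lt h)
      · exact .inr ⟨by rw [show t + 1 = c.length by omega, Nat.mod_self], by omega⟩
    have hmod := Nat.mod_lt (t + 1) (show 0 < c.length by omega)
    rw [Sym2.eq_iff] at hedge
    rcases hedge with ⟨hAt, hMt⟩ | ⟨hAt, hMt⟩
    · have hit := hinj hi ht (hA.symm.trans hAt.symm)
      have := ih hmod (by rw [hsucc, hMt]) hB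
      simp only [cycDist, Walk.length_cons] at this ⊢
      omega
    · have hit := hinj hi hmod (by rw [← hA, hsucc, hMt])
      have := ih ht hAt.symm hB
      simp only [cycDist, Walk.length_cons] at this ⊢
      omega

/-- A `k`-periodic sequence of vertices running around a min cycle of length `k` of `G`
(the paper's `u₀, …, u_{k-1}`, with indices read modulo `k`). -/
structure IsMinCycleSeq (G : SimpleGraph V) (k : ℕ) (y : ℕ → V) : Prop where
  periodic : Function.Periodic y k
  adj : ∀ t, G.Adj (y t) (y (t + 1))
  le_dist : ∀ i d, d ≤ k → min d (k - d) ≤ G.dist (y i) (y (i + d))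

namespace IsMinCycleSeq

variable {k : ℕ} {y : ℕ → V}

theorem shift (hy : IsMinCycleSeq G k y) (o : ℕ) : IsMinCycleSeq G k (fun t => y (t + o)) where
  periodic := hy.periodic.add_const o
  adj t := by simpa only [add_right_comm t 1 o] using hy.adj (t + o)
  le_dist i d hd := by simpa only [add_right_comm i d o] using hy.le_dist (i + o) d hd

theorem min_le_dist (hy : IsMinCycleSeq G k y) {i j : ℕ} (hij : i ≤ j) (hj : j ≤ i + k) :
    min (j - i) (k - (j - i)) ≤ G.dist (y i) (y j) := by
  obtain ⟨d, rfl⟩ := Nat.exists_eq_add_of_le hij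
  simpa using hy.le_dist i d (by omega)

theorem ne (hy : IsMinCycleSeq G k y) {i j : ℕ} (hij : i < j) (hj : j < i + k) : y i ≠ y j := by
  intro h
  have := hy.min_le_dist hij.le hj.le
  rw [h, dist_self] at this
  omega

theorem exists_walk (hy : IsMinCycleSeq G k y) {i j m : ℕ} (hij : i ≤ j) (hjm : j < m)
    (hm : m < i + k) : ∃ p : G.Walk (y i) (y j), y m ∉ p.support ∧ p.length = j - i := by
  induction j, hij using Nat.le_induction with
  | base => exact ⟨.nil, by simpa using (hy.ne hjm hm).symm, by simp⟩
  | succ j hij ih =>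
    obtain ⟨p, hp, hpl⟩ := ih (by omega)
    refine ⟨p.concat (hy.adj j), ?_, by rw [Walk.length_concat]; omega⟩
    rw [Walk.support_concat, List.mem_append, List.mem_singleton, not_or]
    exact ⟨hp, (hy.ne hjm (by omega)).symm⟩

end IsMinCycleSeq

end SimpleGraph

namespace NCG

open SimpleGraph Finset

variable {V : Type*} {α : ℝ} {st : V → Finset V}

theorem IsMinCycle.isMinCycleSeq {G : SimpleGraph V} {a : V} {c : G.Walk a a}
    (hc : IsMinCycle G c) :
    IsMinCycleSeq G c.length (fun t => c.getVert (t % c.length)) where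
  periodic t := by simp only [Nat.add_mod_right]
  adj t := by
    have hk : 0 < c.length := by have := hc.1.three_le_length; omega
    have := c.adj_getVert_succ (Nat.mod_lt t hk)
    rwa [← c.getVert_mod_length (show t % c.length + 1 ≤ c.length from Nat.mod_lt t hk),
      Nat.mod_add_mod] at this
  le_dist i d hd := by
    have hk : 0 < c.length := by have := hc.1.three_le_length; omega
    rcases hd.lt_or_eq with hd | rfl
    swap
    · simp
    have hmem (s : ℕ) : c.getVert (s % c.length) ∈ c.toSubgraph.verts :=
      c.mem_verts_toSubgraph.2 (c.getVert_mem_support _)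
    rw [← hc.2 _ (hmem i) _ (hmem (i + d))]
    obtain ⟨q, hq⟩ := c.toSubgraph_connected.coe.exists_walk_length_eq_dist
      ⟨_, hmem i⟩ ⟨_, hmem (i + d)⟩
    have := hc.1.cycDist_le_length q (Nat.mod_lt i hk) (Nat.mod_lt (i + d) hk) rfl rfl
    rw [← hq]
    refine le_trans ?_ this
    have hi := Nat.mod_lt i hk
    rw [Nat.add_mod_eq_ite, Nat.mod_eq_of_lt hd]
    split_ifs <;> simp only [cycDist] <;> omega

@[simp]
theorem graph_adj {u v : V} : (graph st).Adj u v ↔ u ≠ v ∧ (v ∈ st u ∨ u ∈ st v) := Iff.rfl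

variable [DecidableEq V]

theorem graph_update_adj_of_ne {a x y : V} {t : Finset V} (hx : x ≠ a) (hy : y ≠ a) :
    (graph (Function.update st a t)).Adj x y ↔ (graph st).Adj x y := by
  simp [Function.update_of_ne hx, Function.update_of_ne hy]

theorem graph_update_adj_self {a b : V} {t : Finset V} :
    (graph (Function.update st a t)).Adj a b ↔ a ≠ b ∧ (b ∈ t ∨ a ∈ st b) := by
  by_cases h : b = a
  · simp [h]
  · simp [Function.update_of_ne h, Ne.symm h]

theorem graph_update_erase_adj {a b x y : V} (h : (graph st).Adj x y) (hxy : s(x, y) ≠ s(a, b)) :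
    (graph (Function.update st a ((st a).erase b))).Adj x y := by
  by_cases hx : x = a
  · subst hx
    have hyb : y ≠ b := fun hyb => hxy (by rw [hyb])
    obtain ⟨hne, h | h⟩ := h
    · exact graph_update_adj_self.2 ⟨hne, .inl (mem_erase.2 ⟨hyb, h⟩)⟩
    · exact graph_update_adj_self.2 ⟨hne, .inr h⟩
  by_cases hy : y = a
  · subst hy
    have hxb : x ≠ b := fun hxb => hxy (by rw [hxb, Sym2.eq_swap])
    obtain ⟨hne, h | h⟩ := h
    · exact (graph_update_adj_self.2 ⟨hne.symm, .inr h⟩).symm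
    · exact (graph_update_adj_self.2 ⟨hne.symm, .inl (mem_erase.2 ⟨hxb, h⟩)⟩).symm
  exact (graph_update_adj_of_ne hx hy).2 h

variable [Fintype V]

noncomputable def distSum (G : SimpleGraph V) (v : V) : ℕ := ∑ w, G.dist v w

theorem Stable.connected [Nonempty V] (hstable : Stable α st) : (graph st).Connected := by
  by_contra hdis
  obtain ⟨u⟩ := ‹Nonempty V›
  have hstar : (graph (Function.update st u (univ.erase u))).Connected :=
    (connected_iff_exists_forall_reachable _).2 ⟨u, fun w => by
      by_cases hw : w = u
      · rw [hw]
      · exact (graph_update_adj_self.2 ⟨Ne.symm hw, .inl (by simp [hw])⟩).reachable⟩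
  have h := hstable u _ (notMem_erase u univ)
  rw [cost, cost, distcost, distcost, if_neg hdis, if_pos hstar,
    EReal.add_top_of_ne_bot (EReal.coe_ne_bot _), top_le_iff, ← EReal.coe_add] at h
  exact EReal.coe_ne_top _ h

theorem Stable.alpha_mul_card_add_distSum_le (hstable : Stable α st)
    (hconn : (graph st).Connected) {a : V} {t : Finset V} (ha : a ∉ t)
    (hconn' : (graph (Function.update st a t)).Connected) :
    α * #(st a) + distSum (graph st) a ≤ α * #t + distSum (graph (Function.update st a t)) a := by
  have h := hstable a t ha
  rw [cost, cost, distcost, distcost, if_pos hconn, if_pos hconn', Function.update_self,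
    ← EReal.coe_add, ← EReal.coe_add, EReal.coe_le_coe_iff] at h
  simpa [distSum] using h

/-- Agent `a` dropping her edge to `b`: with the detour `D`, every distance from `a` grows by
at most `D.length - 1`, and not at all on `S`. -/
theorem Stable.alpha_le_of_drop (hstable : Stable α st) (hconn : (graph st).Connected)
    {a b : V} (ha : a ∉ st a) (hb : b ∈ st a)
    (D : (graph (Function.update st a ((st a).erase b))).Walk a b) (S : Finset V)
    (hS : ∀ w ∈ S,
      (graph (Function.update st a ((st a).erase b))).dist a w ≤ (graph st).dist a w) :
    α ≤ (#Sᶜ * (D.length - 1) : ℕ) := by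
  have hab : a ≠ b := fun h => ha (h ▸ hb)
  have hkeep : ∀ x y, (graph st).Adj x y → x ≠ a → y ≠ a →
      (graph (Function.update st a ((st a).erase b))).Adj x y := fun x y h hx hy =>
    graph_update_erase_adj h fun he => by
      rcases Sym2.eq_iff.1 he with ⟨h', -⟩ | ⟨-, h'⟩
      exacts [hx h', hy h']
  have hkeep' : ∀ y, (graph st).Adj a y → y ≠ b →
      (graph (Function.update st a ((st a).erase b))).Adj a y := fun y h hy =>
    graph_update_erase_adj h fun he => hy (Sym2.congr_right.1 he)
  have hdetour := exists_walk_length_add_one_le_of_detour hconn hkeep hkeep' D hab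
  have hconn' : (graph (Function.update st a ((st a).erase b))).Connected :=
    (connected_iff_exists_forall_reachable _).2 ⟨a, fun w => (hdetour w).choose.reachable⟩
  have hsum : distSum (graph (Function.update st a ((st a).erase b))) a ≤
      distSum (graph st) a + #Sᶜ * (D.length - 1) :=
    sum_le_sum_add_card_compl_mul S hS fun w _ => by
      obtain ⟨q, hq⟩ := hdetour w
      have := dist_le q
      omega
  have hstab :=
    hstable.alpha_mul_card_add_distSum_le hconn (fun h => ha (mem_of_mem_erase h)) hconn'
  have hcard : (#((st a).erase b) : ℝ) + 1 = #(st a) := by exact_mod_cast card_erase_add_one hb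
  have hsum' : (distSum (graph (Function.update st a ((st a).erase b))) a : ℝ) ≤
      distSum (graph st) a + (#Sᶜ * (D.length - 1) : ℕ) := by exact_mod_cast hsum
  rw [← hcard, mul_add, mul_one] at hstab
  linarith

theorem Stable.alpha_le_of_triangle (hstable : Stable α st) (hconn : (graph st).Connected)
    {x₀ x₁ x₂ : V} (h₀ : x₀ ∉ st x₀) (h₁₂ : (graph st).Adj x₁ x₂) (h₂₀ : (graph st).Adj x₂ x₀)
    (hbuy : x₁ ∈ st x₀) : α ≤ Fintype.card V - 2 := by
  have h₀₂ := graph_update_erase_adj (a := x₀) (b := x₁) h₂₀.symm (by simp [h₁₂.ne', h₂₀.ne])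
  have h₂₁ := graph_update_erase_adj (a := x₀) (b := x₁) h₁₂.symm (by simp [h₁₂.ne', h₂₀.ne])
  have h := hstable.alpha_le_of_drop hconn h₀ hbuy (.cons h₀₂ (.cons h₂₁ .nil)) {x₀, x₂} (by
    simp only [mem_insert, mem_singleton, forall_eq_or_imp, forall_eq, SimpleGraph.dist_self,
      le_refl, true_and]
    rw [dist_eq_one_iff_adj.2 h₂₀.symm]
    exact dist_le (.cons h₀₂ .nil))
  have hcard : #({x₀, x₂} : Finset V)ᶜ + 2 = Fintype.card V := by
    rw [← card_pair h₂₀.ne', card_compl_add_card]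
  simp only [Walk.length_cons, Walk.length_nil] at h
  rw [← hcard]
  push_cast at h ⊢
  linarith

theorem Stable.alpha_le_of_square (hstable : Stable α st) (hconn : (graph st).Connected)
    {x₀ x₁ x₂ x₃ : V} (h₀ : x₀ ∉ st x₀) (h₁₂ : (graph st).Adj x₁ x₂)
    (h₂₃ : (graph st).Adj x₂ x₃) (h₃₀ : (graph st).Adj x₃ x₀) (h₀₂ : 2 ≤ (graph st).dist x₀ x₂)
    (h₁₃ : x₁ ≠ x₃) (hbuy : x₁ ∈ st x₀) : α ≤ 2 * Fintype.card V - 6 := by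
  have hx₂ : x₂ ≠ x₀ := fun h => by rw [h, SimpleGraph.dist_self] at h₀₂; omega
  have hx₁ : x₁ ≠ x₀ := fun h => h₀ (h ▸ hbuy)
  have h₀₃ := graph_update_erase_adj (a := x₀) (b := x₁) h₃₀.symm (by simp [h₁₃.symm, hx₁.symm])
  have h₃₂ := graph_update_erase_adj (a := x₀) (b := x₁) h₂₃.symm (by simp [h₃₀.ne, hx₂])
  have h₂₁ := graph_update_erase_adj (a := x₀) (b := x₁) h₁₂.symm (by simp [hx₂, hx₁])
  have h := hstable.alpha_le_of_drop hconn h₀ hbuy (.cons h₀₃ (.cons h₃₂ (.cons h₂₁ .nil)))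
    {x₀, x₂, x₃} (by
      simp only [mem_insert, mem_singleton, forall_eq_or_imp, forall_eq, SimpleGraph.dist_self,
        le_refl, true_and]
      rw [dist_eq_one_iff_adj.2 h₃₀.symm]
      exact ⟨(dist_le (.cons h₀₃ (.cons h₃₂ .nil))).trans h₀₂, dist_le (.cons h₀₃ .nil)⟩)
  have hcard : #({x₀, x₂, x₃} : Finset V)ᶜ + 3 = Fintype.card V := by
    rw [← card_compl_add_card {x₀, x₂, x₃}, card_insert_of_notMem (by simp [hx₂.symm, h₃₀.ne']),
      card_pair h₂₃.ne]
  simp only [Walk.length_cons, Walk.length_nil] at h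
  rw [← hcard]
  push_cast at h ⊢
  linarith

theorem distSum_add_dist_le_of_adj {G G' : SimpleGraph V} {a r : V} (hG' : G'.Connected)
    (hra : G'.Adj r a) (hle : ∀ w, G'.dist r w ≤ G.dist r w) :
    distSum G' a + G.dist r a + 1 ≤ Fintype.card V + distSum G r := by
  have hstep (w : V) : G'.dist a w ≤ 1 + G.dist r w := by
    have := hG'.dist_triangle (u := a) (v := r) (w := w)
    rw [dist_eq_one_iff_adj.2 hra.symm] at this
    exact this.trans (Nat.add_le_add_left (hle w) 1)
  have hsum := sum_le_sum (s := univ.erase a) fun w _ => hstep w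
  rw [sum_add_distrib, sum_const, card_erase_of_mem (mem_univ a), card_univ, smul_eq_mul,
    mul_one] at hsum
  have hpos : 0 < Fintype.card V := Fintype.card_pos_iff.2 ⟨a⟩
  unfold distSum
  rw [← sum_erase_add _ _ (mem_univ a), SimpleGraph.dist_self, add_zero,
    ← sum_erase_add _ _ (mem_univ a)]
  omega

/-- Agent `a` replacing her edges to `E` by a single edge to `r`. -/
theorem Stable.alpha_mul_add_distSum_le_of_swap (hstable : Stable α st)
    (hconn : (graph st).Connected) {a r : V} {E : Finset V} (ha : a ∉ st a) (hE : E ⊆ st a)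
    (hr : r ∉ st a) (hra : r ≠ a)
    (hreach : ∀ e ∈ E, ∃ p : (graph st).Walk r e,
      a ∉ p.support ∧ p.length ≤ (graph st).dist r a + 1) :
    α * (#E - 1 : ℝ) + distSum (graph st) a + (graph st).dist r a + 1 ≤
      Fintype.card V + distSum (graph st) r := by
  set t := insert r (st a \ E)
  have hat : a ∉ t := by simp [t, hra.symm, ha]
  have hkeep : ∀ x y, (graph st).Adj x y → x ≠ a → y ≠ a →
      (graph (Function.update st a t)).Adj x y := fun x y h hx hy =>
    (graph_update_adj_of_ne hx hy).2 h
  have hra' : (graph (Function.update st a t)).Adj r a :=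
    (graph_update_adj_self.2 ⟨hra.symm, .inl (mem_insert_self r _)⟩).symm
  have hlost (b : V) (hab : (graph st).Adj a b) : (graph (Function.update st a t)).Adj a b ∨
      ∃ p : (graph st).Walk r b, a ∉ p.support ∧ p.length ≤ (graph st).dist r a + 1 := by
    by_cases hb : b ∈ E
    · exact .inr (hreach b hb)
    obtain ⟨hne, h | h⟩ := hab
    · exact .inl (graph_update_adj_self.2 ⟨hne, .inl (mem_insert_of_mem (mem_sdiff.2 ⟨h, hb⟩))⟩)
    · exact .inl (graph_update_adj_self.2 ⟨hne, .inr h⟩)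
  have hwalk := exists_walk_length_le_dist_of_rewire hconn hkeep hra' hlost
  have hconn' : (graph (Function.update st a t)).Connected :=
    (connected_iff_exists_forall_reachable _).2 ⟨r, fun w => (hwalk w).choose.reachable⟩
  have hsum := distSum_add_dist_le_of_adj hconn' hra' fun w => by
    obtain ⟨q, hq⟩ := hwalk w
    exact (dist_le q).trans hq
  have hcard : (#t : ℝ) = #(st a) - #E + 1 := by
    rw [card_insert_of_notMem (fun h => hr (mem_sdiff.1 h).1), card_sdiff_of_subset hE,
      Nat.cast_add, Nat.cast_sub (card_le_card hE), Nat.cast_one]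
  have hstab := hstable.alpha_mul_card_add_distSum_le hconn hat hconn'
  have hsum' : (distSum (graph (Function.update st a t)) a : ℝ) + (graph st).dist r a + 1 ≤
      Fintype.card V + distSum (graph st) r := by exact_mod_cast hsum
  rw [hcard] at hstab
  nlinarith

/-- The two swaps of a critical pair `⟨v, u⟩`: `v` trades her edges to `v₁, v₂` for one
to `u`, and `u` trades her edge to `u'` for one to `v`. -/
theorem Stable.alpha_le_of_swaps (hstable : Stable α st) (hconn : (graph st).Connected)
    {v v₁ v₂ u u' : V} (hv : v ∉ st v) (hu : u ∉ st u) (h₁₂ : v₁ ≠ v₂) (hv₁ : v₁ ∈ st v)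
    (hv₂ : v₂ ∈ st v) (hu' : u' ∈ st u) (hd : 2 ≤ (graph st).dist v u)
    (hW₁ : ∃ p : (graph st).Walk u v₁, v ∉ p.support ∧ p.length ≤ (graph st).dist v u + 1)
    (hW₂ : ∃ p : (graph st).Walk u v₂, v ∉ p.support ∧ p.length ≤ (graph st).dist v u + 1)
    (hW₃ : ∃ p : (graph st).Walk v u', u ∉ p.support ∧ p.length ≤ (graph st).dist v u + 1) :
    α ≤ 2 * Fintype.card V - 6 := by
  have hvu : v ≠ u := fun h => by rw [h, SimpleGraph.dist_self] at hd; omega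
  have hnadj : ¬(graph st).Adj v u := fun h => by rw [dist_eq_one_iff_adj.2 h] at hd; omega
  have hdc : (graph st).dist u v = (graph st).dist v u := dist_comm
  have h₁ := hstable.alpha_mul_add_distSum_le_of_swap hconn hv (E := {v₁, v₂})
    (by simp [insert_subset_iff, hv₁, hv₂])
    (fun h => hnadj ⟨hvu, .inl h⟩) hvu.symm (by simpa [hdc] using ⟨hW₁, hW₂⟩)
  have h₂ := hstable.alpha_mul_add_distSum_le_of_swap hconn hu (E := {u'}) (by simpa using hu')
    (fun h => hnadj ⟨hvu, .inr h⟩) hvu (by simpa using hW₃)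
  rw [card_pair h₁₂, hdc] at h₁
  rw [card_singleton] at h₂
  have hd' : (2 : ℝ) ≤ (graph st).dist v u := by exact_mod_cast hd
  push_cast at h₁ h₂
  linarith

/-- With `j = k / 2`, the buyer of the cycle edge `(y j, y (j + 1))` opposite to `y 0` forms a
critical pair with `y 0`; the arcs of the cycle provide the detours. -/
theorem Stable.alpha_le_of_zero_buys_both (hstable : Stable α st) (hconn : (graph st).Connected)
    (hself : ∀ w, w ∉ st w) {k : ℕ} {y : ℕ → V} (hy : IsMinCycleSeq (graph st) k y) (hk : 5 ≤ k)
    (h₁ : y 1 ∈ st (y 0)) (h₂ : y (k - 1) ∈ st (y 0)) : α ≤ 2 * Fintype.card V - 6 := by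
  set j := k / 2
  have hy₀ : y k = y 0 := hy.periodic.eq
  have h₁₂ : y 1 ≠ y (k - 1) := hy.ne (by omega) (by omega)
  rcases (hy.adj j).2 with hbuy | hbuy
  · have hd : j ≤ (graph st).dist (y 0) (y j) := by
      have := hy.min_le_dist (Nat.zero_le j) (by omega)
      omega
    obtain ⟨p₁, hp₁, hl₁⟩ :=
      hy.exists_walk (i := 1) (j := j) (m := k) (by omega) (by omega) (by omega)
    obtain ⟨p₂, hp₂, hl₂⟩ :=
      hy.exists_walk (i := j) (j := k - 1) (m := k) (by omega) (by omega) (by omega)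
    obtain ⟨p₃, hp₃, hl₃⟩ :=
      hy.exists_walk (i := j + 1) (j := k) (m := j + k) (by omega) (by omega) (by omega)
    rw [hy₀] at hp₁ hp₂
    rw [hy.periodic j] at hp₃
    exact hstable.alpha_le_of_swaps hconn (hself _) (hself _) h₁₂ h₁ h₂ hbuy (by omega)
      ⟨p₁.reverse, by simpa using hp₁, by simp; omega⟩ ⟨p₂, hp₂, by omega⟩
      ⟨p₃.reverse.copy hy₀ rfl, by simpa using hp₃, by simp; omega⟩
  · have hd : k - j - 1 ≤ (graph st).dist (y 0) (y (j + 1)) := by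
      have := hy.min_le_dist (Nat.zero_le (j + 1)) (by omega)
      omega
    obtain ⟨p₁, hp₁, hl₁⟩ :=
      hy.exists_walk (i := 1) (j := j + 1) (m := k) (by omega) (by omega) (by omega)
    obtain ⟨p₂, hp₂, hl₂⟩ :=
      hy.exists_walk (i := j + 1) (j := k - 1) (m := k) (by omega) (by omega) (by omega)
    obtain ⟨p₃, hp₃, hl₃⟩ :=
      hy.exists_walk (i := 0) (j := j) (m := j + 1) (by omega) (by omega) (by omega)
    rw [hy₀] at hp₁ hp₂
    exact hstable.alpha_le_of_swaps hconn (hself _) (hself _) h₁₂.symm h₂ h₁ hbuy (by omega)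
      ⟨p₂, hp₂, by omega⟩ ⟨p₁.reverse, by simpa using hp₁, by simp; omega⟩ ⟨p₃, hp₃, by omega⟩

theorem Stable.alpha_le_of_buys_both (hstable : Stable α st) (hconn : (graph st).Connected)
    (hself : ∀ w, w ∉ st w) {k : ℕ} {y : ℕ → V} (hy : IsMinCycleSeq (graph st) k y) (hk : 5 ≤ k)
    {t : ℕ} (hprev : y t ∈ st (y (t + 1))) (hnext : y (t + 1 + 1) ∈ st (y (t + 1))) :
    α ≤ 2 * Fintype.card V - 6 := by
  refine hstable.alpha_le_of_zero_buys_both hconn hself (hy.shift (t + 1)) hk ?_ ?_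
  · rwa [zero_add, add_comm 1]
  · rwa [zero_add, show k - 1 + (t + 1) = t + k by omega, hy.periodic t]

theorem Stable.alpha_le_of_short_min_cycle (hstable : Stable α st) (hconn : (graph st).Connected)
    (hself : ∀ w, w ∉ st w) (hn : 4 ≤ Fintype.card V) {k : ℕ} {y : ℕ → V}
    (hy : IsMinCycleSeq (graph st) k y) (hk₃ : 3 ≤ k) (hk₄ : k ≤ 4) :
    α ≤ 2 * Fintype.card V - 6 := by
  have hn' : (4 : ℝ) ≤ Fintype.card V := by exact_mod_cast hn
  have hy₀ : y k = y 0 := hy.periodic.eq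
  interval_cases k
  · have h₂₀ : (graph st).Adj (y 2) (y 0) := by simpa [hy₀] using hy.adj 2
    rcases (hy.adj 0).2 with h | h
    · have := hstable.alpha_le_of_triangle hconn (hself _) (hy.adj 1) h₂₀ h
      linarith
    · have := hstable.alpha_le_of_triangle hconn (hself _) h₂₀.symm (hy.adj 1).symm h
      linarith
  · have h₃₀ : (graph st).Adj (y 3) (y 0) := by simpa [hy₀] using hy.adj 3
    rcases (hy.adj 0).2 with h | h
    · exact hstable.alpha_le_of_square hconn (hself _) (hy.adj 1) (hy.adj 2) h₃₀
        (by simpa using hy.min_le_dist (i := 0) (j := 2) (by omega) (by omega))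
        (hy.ne (by omega) (by omega)) h
    · exact hstable.alpha_le_of_square hconn (hself _) h₃₀.symm (hy.adj 2).symm (hy.adj 1).symm
        (by simpa using hy.min_le_dist (i := 1) (j := 3) (by omega) (by omega))
        (hy.ne (by omega) (by omega)) h

end NCG

theorem min_cycle_directed_and_long_general {V : Type*} [Fintype V] [DecidableEq V]
    (α : ℝ) (st : V → Finset V) (hself : ∀ u, u ∉ st u)
    (hn : 4 ≤ Fintype.card V)
    (hα : 2 * (Fintype.card V : ℝ) - 6 < α)
    (hstable : NCG.Stable α st) :
    ∀ (a : V) (c : (NCG.graph st).Walk a a), NCG.IsMinCycle (NCG.graph st) c →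
      NCG.IsDirectedCycle st c ∧ 5 ≤ c.length := by
  intro a c hc
  have : Nonempty V := ⟨a⟩
  have hconn := hstable.connected
  have hy := hc.isMinCycleSeq
  set y := fun t => c.getVert (t % c.length)
  have h3 := hc.1.three_le_length
  have h5 : 5 ≤ c.length := by
    by_contra h
    have := hstable.alpha_le_of_short_min_cycle hconn hself hn hy h3 (by omega)
    linarith
  have hy_eq {i : ℕ} (hi : i ≤ c.length) : y i = c.getVert i := c.getVert_mod_length hi
  refine ⟨⟨hc.1, ?_⟩, h5⟩
  -- Unless some vertex buys both of its cycle edges, all edges are bought in the same direction.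
  rcases forall_or_forall_of_periodic (F := fun t => y (t + 1) ∈ st (y t))
      (B := fun t => y t ∈ st (y (t + 1))) (k := c.length) (by omega)
      (fun t => by simp only [add_right_comm t c.length 1, hy.periodic _])
      (fun t => (hy.adj t).2)
      (fun t hB hF => (hstable.alpha_le_of_buys_both hconn hself hy h5 hB hF).not_gt hα) with h | h
  · exact .inl fun i hi => by simpa only [hy_eq hi.le, hy_eq hi] using h i
  · exact .inr fun i hi => by simpa only [hy_eq hi.le, hy_eq hi] using h i

/-- For `α > 2n−6`, every min cycle of a non-tree stable network with
`n ≥ 4` agents is directed and has length at least 5. -/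
theorem min_cycle_directed_and_long {V : Type*} [Fintype V] [DecidableEq V]
    (α : ℝ) (st : V → Finset V) (hself : ∀ u, u ∉ st u)
    (hn : 4 ≤ Fintype.card V)
    (hα : 2 * (Fintype.card V : ℝ) - 6 < α)
    (hstable : NCG.Stable α st)
    (hnontree : ¬ ((NCG.graph st).Connected ∧ (NCG.graph st).IsAcyclic)) :
    ∀ (a : V) (c : (NCG.graph st).Walk a a), NCG.IsMinCycle (NCG.graph st) c →
      NCG.IsDirectedCycle st c ∧ 5 ≤ c.length :=
  min_cycle_directed_and_long_general α st hself hn hα hstable
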